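/- Conversely, if |φ⟩ ∈ C^2⊗C^2 is a unit vector such that |φ⟩⟨φ| has diagonal correlation tensor (T_{ij}=0 for i≠j, i,j∈{1,2,3}) in the Pauli basis, then up to a global phase |φ⟩ belongs to one of the six families a|φ^+⟩+b|φ^-⟩, a|ψ^+⟩+b|ψ^-⟩, a|φ^+⟩+b|ψ^+⟩, a|φ^-⟩+b|ψ^-⟩, a|φ^+⟩+ib|ψ^-⟩, a|φ^-⟩+ib|ψ^+⟩ with a,b real and a²+b²=1. -/

import Mathlib

/-
Expand `φ = α φ⁺ + β φ⁻ + γ ψ⁺ + δ ψ⁻` in the Bell basis. The six conditions `T_ij ± T_ji = 0`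
(`i ≠ j`) say that the pairs `(α, β), (γ, δ), (α, γ), (β, δ)` are in phase (`conj u * v` is real)
and the pairs `(α, δ), (β, γ)` are in quadrature (`conj u * v` is imaginary). Any three of the
coefficients contain some `a` in phase with the other two, `u` and `v`, which are in quadrature;
then `|a|² conj u v = conj (conj a u) (conj a v)` is both real and imaginary, so one of `a, u, v`
vanishes. Hence only two coefficients survive, and two coefficients of total weight one in phase
(resp. in quadrature) are `c • (a, b)` (resp. `c • (a, i b)`) with `‖c‖ = 1` and `a, b` real.
-/

open Matrix Kronecker

noncomputable def σx : Matrix (Fin 2) (Fin 2) ℂ := !![0, 1; 1, 0]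
noncomputable def σy : Matrix (Fin 2) (Fin 2) ℂ := !![0, -Complex.I; Complex.I, 0]
noncomputable def σz : Matrix (Fin 2) (Fin 2) ℂ := !![1, 0; 0, -1]

/-- The Pauli basis `σ₀ = I, σ₁ = σx, σ₂ = σy, σ₃ = σz`. -/
noncomputable def pauli : Fin 4 → Matrix (Fin 2) (Fin 2) ℂ := ![1, σx, σy, σz]

noncomputable def phiPlus : Fin 2 × Fin 2 → ℂ := fun p =>
  if p = (0, 0) then 1 / Real.sqrt 2 else if p = (1, 1) then 1 / Real.sqrt 2 else 0

noncomputable def phiMinus : Fin 2 × Fin 2 → ℂ := fun p =>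
  if p = (0, 0) then 1 / Real.sqrt 2 else if p = (1, 1) then -(1 / Real.sqrt 2) else 0

noncomputable def psiPlus : Fin 2 × Fin 2 → ℂ := fun p =>
  if p = (0, 1) then 1 / Real.sqrt 2 else if p = (1, 0) then 1 / Real.sqrt 2 else 0

noncomputable def psiMinus : Fin 2 × Fin 2 → ℂ := fun p =>
  if p = (0, 1) then 1 / Real.sqrt 2 else if p = (1, 0) then -(1 / Real.sqrt 2) else 0

/-- The correlation tensor of a projector is diagonal. -/
def DiagCorr (φ : Fin 2 × Fin 2 → ℂ) : Prop :=
  ∀ i j : Fin 4, i ≠ 0 → j ≠ 0 → i ≠ j →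
    ((1 : ℂ)/4) * ((pauli i ⊗ₖ pauli j) * vecMulVec φ (star φ)).trace = 0

open ComplexConjugate

lemma Complex.re_eq_zero_of_conj_eq_neg {z : ℂ} (h : conj z = -z) : z.re = 0 := by
  have := congrArg Complex.re h
  rw [Complex.conj_re, Complex.neg_re] at this
  linarith

lemma Complex.im_conj_mul_comm (u v : ℂ) : (conj v * u).im = -(conj u * v).im := by
  simp only [Complex.mul_im, Complex.conj_re, Complex.conj_im]
  ring

lemma eq_zero_or_eq_zero_or_eq_zero_of_inPhase_of_quadrature {a u v : ℂ}
    (hu : (conj a * u).im = 0) (hv : (conj a * v).im = 0) (huv : (conj u * v).re = 0) :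
    a = 0 ∨ u = 0 ∨ v = 0 := by
  have key : conj u * v * (Complex.normSq a : ℂ) = 0 := by
    have e : conj u * v * Complex.normSq a = conj (conj a * u) * (conj a * v) := by
      rw [← Complex.mul_conj]
      simp only [map_mul, Complex.conj_conj]
      ring
    apply Complex.ext
    · simp [huv]
    · rw [e, Complex.mul_im, Complex.conj_re, Complex.conj_im, hu, hv]
      simp
  simp only [mul_eq_zero, map_eq_zero, Complex.ofReal_eq_zero] at key
  tauto

lemma exists_norm_eq_one_conj_mul_im_eq_zero {u v : ℂ} (h : (conj u * v).im = 0)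
    (hn : Complex.normSq u + Complex.normSq v = 1) :
    ∃ c : ℂ, ‖c‖ = 1 ∧ (conj c * u).im = 0 ∧ (conj c * v).im = 0 := by
  by_cases hu : u = 0
  · subst hu
    rw [Complex.normSq_zero, zero_add] at hn
    refine ⟨v, by rw [Complex.norm_def, hn, Real.sqrt_one], by simp, ?_⟩
    rw [Complex.conj_mul', ← Complex.ofReal_pow, Complex.ofReal_im]
  · refine ⟨u / ‖u‖, ?_, ?_, ?_⟩
    · rw [norm_div, Complex.norm_real, norm_norm, div_self (norm_ne_zero_iff.mpr hu)]
    all_goals rw [map_div₀, Complex.conj_ofReal, div_mul_eq_mul_div, Complex.div_ofReal_im]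
    · rw [Complex.conj_mul', ← Complex.ofReal_pow, Complex.ofReal_im, zero_div]
    · simp [h]

lemma eq_mul_re_of_conj_mul_im_eq_zero {c z : ℂ} (hc : ‖c‖ = 1) (h : (conj c * z).im = 0) :
    z = c * (conj c * z).re := by
  have hreal : (((conj c * z).re : ℝ) : ℂ) = conj c * z := Complex.ext (by simp) (by simp [h])
  rw [hreal, ← mul_assoc, Complex.mul_conj, Complex.normSq_eq_norm_sq, hc]
  simp

lemma exists_real_combination_of_inPhase {V : Type*} [AddCommGroup V] [Module ℂ V] {u v : ℂ}
    (e f : V) (hn : Complex.normSq u + Complex.normSq v = 1) (h : (conj u * v).im = 0) :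
    ∃ c : ℂ, ‖c‖ = 1 ∧ ∃ a b : ℝ, a ^ 2 + b ^ 2 = 1 ∧
      u • e + v • f = c • ((a : ℂ) • e + (b : ℂ) • f) := by
  obtain ⟨c, hc, hu, hv⟩ := exists_norm_eq_one_conj_mul_im_eq_zero h hn
  refine ⟨c, hc, (conj c * u).re, (conj c * v).re, ?_, ?_⟩
  · calc (conj c * u).re ^ 2 + (conj c * v).re ^ 2
          = Complex.normSq (conj c * u) + Complex.normSq (conj c * v) := by
            simp only [Complex.normSq_apply, hu, hv]; ring
      _ = 1 := by
            simp only [map_mul, Complex.normSq_conj, Complex.normSq_eq_norm_sq c, hc]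
            simpa using hn
  · conv_lhs => rw [eq_mul_re_of_conj_mul_im_eq_zero hc hu, eq_mul_re_of_conj_mul_im_eq_zero hc hv]
    rw [smul_add, mul_smul, mul_smul]

lemma exists_real_combination_of_quadrature {V : Type*} [AddCommGroup V] [Module ℂ V]
    {u v : ℂ} (e f : V) (hn : Complex.normSq u + Complex.normSq v = 1) (h : (conj u * v).re = 0) :
    ∃ c : ℂ, ‖c‖ = 1 ∧ ∃ a b : ℝ, a ^ 2 + b ^ 2 = 1 ∧
      u • e + v • f = c • ((a : ℂ) • e + (Complex.I * b) • f) := by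
  have hIv : (conj u * (-Complex.I * v)).im = 0 := by
    rw [mul_left_comm, neg_mul, Complex.neg_im, Complex.I_mul_im, h, neg_zero]
  obtain ⟨c, hc, a, b, hab, heq⟩ :=
    exists_real_combination_of_inPhase e (Complex.I • f) (by simpa using hn) hIv
  refine ⟨c, hc, a, b, hab, ?_⟩
  rwa [smul_smul, smul_smul, mul_comm (b : ℂ),
    show -Complex.I * v * Complex.I = v by linear_combination -v * Complex.I_mul_I] at heq

lemma two_eq_zero_of_phase_relations {α β γ δ : ℂ} (hαβ : (conj α * β).im = 0)
    (hγδ : (conj γ * δ).im = 0) (hαγ : (conj α * γ).im = 0) (hβδ : (conj β * δ).im = 0)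
    (hαδ : (conj α * δ).re = 0) (hβγ : (conj β * γ).re = 0) :
    (γ = 0 ∧ δ = 0) ∨ (α = 0 ∧ β = 0) ∨ (β = 0 ∧ δ = 0) ∨ (α = 0 ∧ γ = 0) ∨
      (β = 0 ∧ γ = 0) ∨ (α = 0 ∧ δ = 0) := by
  have hβα : (conj β * α).im = 0 := by rw [Complex.im_conj_mul_comm, hαβ, neg_zero]
  have hγα : (conj γ * α).im = 0 := by rw [Complex.im_conj_mul_comm, hαγ, neg_zero]
  have hδβ : (conj δ * β).im = 0 := by rw [Complex.im_conj_mul_comm, hβδ, neg_zero]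
  have hδγ : (conj δ * γ).im = 0 := by rw [Complex.im_conj_mul_comm, hγδ, neg_zero]
  have := eq_zero_or_eq_zero_or_eq_zero_of_inPhase_of_quadrature hαβ hαγ hβγ
  have := eq_zero_or_eq_zero_or_eq_zero_of_inPhase_of_quadrature hβα hβδ hαδ
  have := eq_zero_or_eq_zero_or_eq_zero_of_inPhase_of_quadrature hγα hγδ hαδ
  have := eq_zero_or_eq_zero_or_eq_zero_of_inPhase_of_quadrature hδβ hδγ hβγ
  tauto

lemma sqrt_two_sq_complex : ((Real.sqrt 2 : ℝ) : ℂ) ^ 2 = 2 := by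
  norm_cast
  simp

noncomputable def bellCoeff (b φ : Fin 2 × Fin 2 → ℂ) : ℂ := star b ⬝ᵥ φ

section BellCoordinates

variable (φ : Fin 2 × Fin 2 → ℂ)

lemma bellCoeff_phiPlus : bellCoeff phiPlus φ = (φ (0, 0) + φ (1, 1)) / Real.sqrt 2 := by
  simp [bellCoeff, phiPlus, dotProduct, Fintype.sum_prod_type, div_eq_inv_mul, mul_add]

lemma bellCoeff_phiMinus : bellCoeff phiMinus φ = (φ (0, 0) - φ (1, 1)) / Real.sqrt 2 := by
  simp [bellCoeff, phiMinus, dotProduct, Fintype.sum_prod_type, div_eq_inv_mul, mul_add,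
    sub_eq_add_neg]

lemma bellCoeff_psiPlus : bellCoeff psiPlus φ = (φ (0, 1) + φ (1, 0)) / Real.sqrt 2 := by
  simp [bellCoeff, psiPlus, dotProduct, Fintype.sum_prod_type, div_eq_inv_mul, mul_add]

lemma bellCoeff_psiMinus : bellCoeff psiMinus φ = (φ (0, 1) - φ (1, 0)) / Real.sqrt 2 := by
  simp [bellCoeff, psiMinus, dotProduct, Fintype.sum_prod_type, div_eq_inv_mul, mul_add,
    sub_eq_add_neg]

lemma bell_expansion :
    φ = bellCoeff phiPlus φ • phiPlus + bellCoeff phiMinus φ • phiMinus +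
      bellCoeff psiPlus φ • psiPlus + bellCoeff psiMinus φ • psiMinus := by
  rw [bellCoeff_phiPlus, bellCoeff_phiMinus, bellCoeff_psiPlus, bellCoeff_psiMinus]
  ext ⟨i, j⟩
  fin_cases i <;> fin_cases j <;>
    simp only [Fin.zero_eta, Fin.mk_one, Pi.add_apply, Pi.smul_apply, smul_eq_mul, phiPlus,
      phiMinus, psiPlus, psiMinus, Prod.mk.injEq, one_ne_zero, zero_ne_one, and_false, and_true,
      and_self, ↓reduceIte] <;>
    field_simp <;> rw [sqrt_two_sq_complex] <;> ring

lemma sum_normSq_bellCoeff :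
    ((Complex.normSq (bellCoeff phiPlus φ) + Complex.normSq (bellCoeff phiMinus φ) +
      Complex.normSq (bellCoeff psiPlus φ) + Complex.normSq (bellCoeff psiMinus φ) : ℝ) : ℂ) =
      star φ ⬝ᵥ φ := by
  simp only [Complex.ofReal_add, ← Complex.mul_conj]
  simp only [bellCoeff_phiPlus, bellCoeff_phiMinus, bellCoeff_psiPlus, bellCoeff_psiMinus,
    map_div₀, map_add, map_sub, Complex.conj_ofReal, dotProduct, Fintype.sum_prod_type,
    Fin.sum_univ_two, Pi.star_apply, Complex.star_def]
  field_simp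
  linear_combination -(φ (0, 0) * conj (φ (0, 0)) + φ (0, 1) * conj (φ (0, 1)) +
    φ (1, 0) * conj (φ (1, 0)) + φ (1, 1) * conj (φ (1, 1))) * sqrt_two_sq_complex

end BellCoordinates

lemma bellCoeff_phase_relations_of_diagCorr {φ : Fin 2 × Fin 2 → ℂ} (hdiag : DiagCorr φ) :
    (conj (bellCoeff phiPlus φ) * bellCoeff phiMinus φ).im = 0 ∧
    (conj (bellCoeff psiPlus φ) * bellCoeff psiMinus φ).im = 0 ∧
    (conj (bellCoeff phiPlus φ) * bellCoeff psiPlus φ).im = 0 ∧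
    (conj (bellCoeff phiMinus φ) * bellCoeff psiMinus φ).im = 0 ∧
    (conj (bellCoeff phiPlus φ) * bellCoeff psiMinus φ).re = 0 ∧
    (conj (bellCoeff phiMinus φ) * bellCoeff psiPlus φ).re = 0 := by
  have h12 := hdiag 1 2 (by decide) (by decide) (by decide)
  have h21 := hdiag 2 1 (by decide) (by decide) (by decide)
  have h13 := hdiag 1 3 (by decide) (by decide) (by decide)
  have h31 := hdiag 3 1 (by decide) (by decide) (by decide)
  have h23 := hdiag 2 3 (by decide) (by decide) (by decide)
  have h32 := hdiag 3 2 (by decide) (by decide) (by decide)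
  simp only [one_div, trace, pauli, σx, σy, σz, Fin.isValue, cons_val_one, cons_val_zero, cons_val,
    diag_apply, Matrix.mul_apply, kroneckerMap_apply, of_apply, cons_val', cons_val_fin_one,
    vecMulVec_apply, Pi.star_apply, RCLike.star_def, Fintype.sum_prod_type, Fin.sum_univ_two,
    mul_zero, zero_mul, mul_neg, neg_mul, zero_add, add_zero, neg_zero, one_mul, mul_eq_zero,
    inv_eq_zero, OfNat.ofNat_ne_zero, false_or, mul_one, neg_neg] at h12 h21 h13 h31 h23 h32
  have him (z : ℂ) (h : conj (Complex.I * z) = -(Complex.I * z)) : z.im = 0 := by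
    simpa using Complex.re_eq_zero_of_conj_eq_neg h
  refine ⟨him _ ?_, him _ ?_, him _ ?_, him _ ?_, Complex.re_eq_zero_of_conj_eq_neg ?_,
    Complex.re_eq_zero_of_conj_eq_neg ?_⟩ <;>
  simp only [map_mul, Complex.conj_conj, Complex.conj_I, bellCoeff_phiPlus, bellCoeff_phiMinus,
    bellCoeff_psiPlus, bellCoeff_psiMinus, map_div₀, map_add, map_sub, Complex.conj_ofReal]
  · linear_combination ((Real.sqrt 2 : ℂ)⁻¹ ^ 2) * (h12 + h21)
  · linear_combination (-(Real.sqrt 2 : ℂ)⁻¹ ^ 2) * (h12 - h21)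
  · linear_combination (-(Real.sqrt 2 : ℂ)⁻¹ ^ 2) * (h23 + h32)
  · linear_combination ((Real.sqrt 2 : ℂ)⁻¹ ^ 2) * (h23 - h32)
  · linear_combination ((Real.sqrt 2 : ℂ)⁻¹ ^ 2) * (h31 - h13)
  · linear_combination ((Real.sqrt 2 : ℂ)⁻¹ ^ 2) * (h13 + h31)

theorem diagonal_correlation_classification (φ : Fin 2 × Fin 2 → ℂ)
    (hunit : star φ ⬝ᵥ φ = 1) (hdiag : DiagCorr φ) :
    ∃ (c : ℂ), ‖c‖ = 1 ∧ ∃ (a b : ℝ), a ^ 2 + b ^ 2 = 1 ∧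
      (φ = c • ((a : ℂ) • phiPlus + (b : ℂ) • phiMinus) ∨
       φ = c • ((a : ℂ) • psiPlus + (b : ℂ) • psiMinus) ∨
       φ = c • ((a : ℂ) • phiPlus + (b : ℂ) • psiPlus) ∨
       φ = c • ((a : ℂ) • phiMinus + (b : ℂ) • psiMinus) ∨
       φ = c • ((a : ℂ) • phiPlus + (Complex.I * (b : ℂ)) • psiMinus) ∨
       φ = c • ((a : ℂ) • phiMinus + (Complex.I * (b : ℂ)) • psiPlus)) := by
  obtain ⟨hαβ, hγδ, hαγ, hβδ, hαδ, hβγ⟩ := bellCoeff_phase_relations_of_diagCorr hdiag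
  have hnorm := sum_normSq_bellCoeff φ
  rw [hunit, ← Complex.ofReal_one, Complex.ofReal_inj] at hnorm
  rw [bell_expansion φ]
  rcases two_eq_zero_of_phase_relations hαβ hγδ hαγ hβδ hαδ hβγ with
    ⟨hγ, hδ⟩ | ⟨hα, hβ⟩ | ⟨hβ, hδ⟩ | ⟨hα, hγ⟩ | ⟨hβ, hγ⟩ | ⟨hα, hδ⟩
  · obtain ⟨c, hc, a, b, hab, h⟩ := exists_real_combination_of_inPhase phiPlus phiMinus
      (by simpa [hγ, hδ] using hnorm) hαβ
    exact ⟨c, hc, a, b, hab, Or.inl <| by simpa [hγ, hδ] using h⟩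
  · obtain ⟨c, hc, a, b, hab, h⟩ := exists_real_combination_of_inPhase psiPlus psiMinus
      (by simpa [hα, hβ] using hnorm) hγδ
    exact ⟨c, hc, a, b, hab, Or.inr <| Or.inl <| by simpa [hα, hβ] using h⟩
  · obtain ⟨c, hc, a, b, hab, h⟩ := exists_real_combination_of_inPhase phiPlus psiPlus
      (by simpa [hβ, hδ] using hnorm) hαγ
    exact ⟨c, hc, a, b, hab, Or.inr <| Or.inr <| Or.inl <| by simpa [hβ, hδ] using h⟩
  · obtain ⟨c, hc, a, b, hab, h⟩ := exists_real_combination_of_inPhase phiMinus psiMinus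
      (by simpa [hα, hγ] using hnorm) hβδ
    exact ⟨c, hc, a, b, hab, Or.inr <| Or.inr <| Or.inr <| Or.inl <| by simpa [hα, hγ] using h⟩
  · obtain ⟨c, hc, a, b, hab, h⟩ := exists_real_combination_of_quadrature phiPlus psiMinus
      (by simpa [hβ, hγ] using hnorm) hαδ
    exact ⟨c, hc, a, b, hab, Or.inr <| Or.inr <| Or.inr <| Or.inr <| Or.inl <|
      by simpa [hβ, hγ] using h⟩
  · obtain ⟨c, hc, a, b, hab, h⟩ := exists_real_combination_of_quadrature phiMinus psiPlus
      (by simpa [hα, hδ] using hnorm) hβγ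
    exact ⟨c, hc, a, b, hab, Or.inr <| Or.inr <| Or.inr <| Or.inr <| Or.inr <|
      by simpa [hα, hδ] using h⟩
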